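/- If C is a knot PD-code (μ = 1) containing exactly one Reidemeister 1 loop, i.e., exactly one quadruple in which some label appears with both signs (necessarily of one of the forms [+i, −i, j, k], [i, k, j, −j], [i, j, −j, k], or [i, j, k, −i]), then C is fixed by no non-identity element of the Whitten group Γ_1 = Z_2 × Z_2 acting on PD-codes: it is not fixed by the mirror element (−1, 1) (since no such quadruple is invariant under a cyclic shift by 1), and it is not fixed by the reversal element (1, −1). -/

import Mathlib

/-!
STATEMENT 8.  If `C` is a knot PD-code (`μ = 1`) containing exactly one
Reidemeister 1 loop — exactly one quadruple in which some label appears with both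
signs — then `C` is fixed by no non-identity element of the Whitten group
`Γ_1 ≅ Z₂ × Z₂`: it is not fixed by the mirror element `(−1, 1)` and it is not
fixed by the reversal element `(1, −1)`.
-/

/-- A label `(i, j)`: arc `j` of component `i` (arcs are numbered `1, …, nᵢ`). -/
abbrev Label (μ : ℕ) := Fin μ × ℕ

/-- A signed label; the `Bool` is the sign (`true` = positive). -/
abbrev SL (μ : ℕ) := Bool × Label μ

/-- A quadruple of signed labels. -/
abbrev Quad (μ : ℕ) := Fin 4 → SL μ

/-- Negation of a signed label. -/
def negS {μ : ℕ} (x : SL μ) : SL μ := (!x.1, x.2)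

/-- `Paired nn a b`: `a` and `b` are non-adjacent entries of a quadruple with `a`
positive with label `(i, j)` and `b` negative with label `(i, j+1)` (second
coordinates consecutive modulo `nn i`, on the labels `1, …, nn i`); this encodes
conditions (3) and (4): equal first coordinates, consecutive second coordinates,
opposite signs, the lesser (i.e. earlier in the cyclic order) label positive. -/
def Paired {μ : ℕ} (nn : Fin μ → ℕ) (a b : SL μ) : Prop :=
  a.1 = true ∧ b.1 = false ∧ b.2.1 = a.2.1 ∧ b.2.2 = a.2.2 % nn a.2.1 + 1

/-- `C = (nn, Q)` is a PD-code on the label set `{(i,j) : i : Fin μ, 1 ≤ j ≤ nn i}`: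
conditions (1)–(4) of the definition of a PD-code. -/
structure IsPDCode {μ : ℕ} (nn : Fin μ → ℕ) (Q : Finset (Quad μ)) : Prop where
  /-- every component has at least one arc -/
  npos : ∀ i, 1 ≤ nn i
  /-- all entries are labels of the label set -/
  mem : ∀ q ∈ Q, ∀ k : Fin 4, 1 ≤ (q k).2.2 ∧ (q k).2.2 ≤ nn (q k).2.1
  /-- (1): each label appears exactly twice, once positively and once negatively;
  equivalently each signed label occurs exactly once as an entry -/
  once : ∀ x : SL μ, 1 ≤ x.2.2 → x.2.2 ≤ nn x.2.1 →
      ∃! qk : {q // q ∈ Q} × Fin 4, (qk.1 : Quad μ) qk.2 = x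
  /-- (2): each quadruple contains two positive (and hence two negative) entries -/
  twoPos : ∀ q ∈ Q, (Finset.univ.filter fun k : Fin 4 => (q k).1 = true).card = 2
  /-- (2): each quadruple begins with a positive entry -/
  startPos : ∀ q ∈ Q, (q 0).1 = true
  /-- (3),(4) for the first and third entries -/
  under : ∀ q ∈ Q, Paired nn (q 0) (q 2)
  /-- (3),(4) for the second and fourth entries -/
  over' : ∀ q ∈ Q, Paired nn (q 1) (q 3) ∨ Paired nn (q 3) (q 1)

/-- The set of signed labels `{+λ, −λ : λ ∈ Λ}` of the code. -/
abbrev SLabels {μ : ℕ} (nn : Fin μ → ℕ) := {x : SL μ // 1 ≤ x.2.2 ∧ x.2.2 ≤ nn x.2.1}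

/-- `s` is the successor map of the PD-code `(nn, Q)`: it sends each entry of a
quadruple to the negation of the (cyclically) next entry of that quadruple. -/
def IsSuccessor {μ : ℕ} (nn : Fin μ → ℕ) (Q : Finset (Quad μ))
    (s : Equiv.Perm (SLabels nn)) : Prop :=
  ∀ q ∈ Q, ∀ (k : Fin 4) (hk : 1 ≤ (q k).2.2 ∧ (q k).2.2 ≤ nn (q k).2.1),
    (s ⟨q k, hk⟩ : SLabels nn).val = negS (q (k + 1))

/-- An element `γ = (ε₀, ε₁, …, ε_μ, p)` of the Whitten group `Γ_μ = Z₂^{μ+1} ⋊ S_μ`.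
Signs are encoded as `Bool` (`true` = `+1`, `false` = `−1`); `e0` is `ε₀`, `e i` is
`ε_{i+1}` for `i : Fin μ`, and `p ∈ S_μ` permutes the components. -/
structure Whitten (μ : ℕ) where
  e0 : Bool
  e : Fin μ → Bool
  p : Equiv.Perm (Fin μ)

/-- The identity element `(1, 1, …, 1, id)` of `Γ_μ`. -/
def wOne (μ : ℕ) : Whitten μ := ⟨true, fun _ => true, 1⟩

/-- The Whitten group operation
`(ε, p) * (ε', q) = (ε₀ε'₀, ε₁ε'_{p(1)}, …, ε_με'_{p(μ)}, q ∘ p)`.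
(For sign bits, multiplication is Boolean equality; `γ'.p * γ.p = γ'.p ∘ γ.p`.) -/
def wMul {μ : ℕ} (γ γ' : Whitten μ) : Whitten μ :=
  ⟨γ.e0 == γ'.e0, fun i => γ.e i == γ'.e (γ.p i), γ'.p * γ.p⟩

/-- (i) of the action: the permutation `p` relabels component `c` as `p c`; the new
component `i` therefore has `nn (p⁻¹ i)` arcs. -/
def actN {μ : ℕ} (γ : Whitten μ) (nn : Fin μ → ℕ) : Fin μ → ℕ := fun i => nn (γ.p⁻¹ i)

/-- The pointwise relabelling of a signed label `x` by `γ`: (i) the first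
coordinate is replaced by `p` of it; (iii) if the resulting component `i` has
`ε_i = −1`, the second coordinate `j ∈ {1,…,nᵢ}` is replaced by the permutation
fixing `1` and exchanging `j` with `nᵢ + 2 − j` (written below as
`j ↦ (nᵢ + 1 − j) % nᵢ + 1`), and the sign is reversed. -/
def relabel {μ : ℕ} (γ : Whitten μ) (nn : Fin μ → ℕ) (x : SL μ) : SL μ :=
  if γ.e (γ.p x.2.1) = true then (x.1, (γ.p x.2.1, x.2.2))
  else (!x.1, (γ.p x.2.1, (nn x.2.1 + 1 - x.2.2) % nn x.2.1 + 1))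

/-- The action of `γ` on a quadruple `q`, the steps being applied in order:
(i) apply `p` to first coordinates (pointwise, via `relabel`);
(ii) if `ε₀ = −1`, cyclically shift each quadruple of positive sign-pattern
`(+,−,−,+)` one position to the right (`d2 = −1`) and each quadruple of negative
sign-pattern `(+,+,−,−)` one position to the left (`d2 = 1`);
(iii) if the component `i` of the incoming under-edge (the entry at position `0`
after step (ii), i.e. `q d2`) has `ε_i = −1`, cyclically shift the quadruple by two
(`d3 = 2`), and relabel second coordinates and reverse signs in each component `i`
with `ε_i = −1` (pointwise, via `relabel`). -/
def actQuad {μ : ℕ} (γ : Whitten μ) (nn : Fin μ → ℕ) (q : Quad μ) : Quad μ :=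
  let d2 : Fin 4 := if γ.e0 = true then 0 else if (q 3).1 = true then -1 else 1
  let d3 : Fin 4 := if γ.e (γ.p ((q d2).2.1)) = true then 0 else 2
  fun k => relabel γ nn (q (k + d2 + d3))

/-- `γ` fixes the PD-code `(nn, Q)`. -/
def Fixes {μ : ℕ} (γ : Whitten μ) (nn : Fin μ → ℕ) (Q : Finset (Quad μ)) : Prop :=
  actN γ nn = nn ∧ Q.image (actQuad γ nn) = Q

/-- The mirror element `(−1, 1)` of `Γ_1`. -/
def mirrorW : Whitten 1 := ⟨false, fun _ => true, 1⟩

/-- The reversal element `(1, −1)` of `Γ_1`. -/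
def reverseW : Whitten 1 := ⟨true, fun _ => false, 1⟩

lemma relabel_fst (γ : Whitten 1) (nn : Fin 1 → ℕ) (x : SL 1) :
    (relabel γ nn x).1 = (x.1 == γ.e 0) := by
  have h : γ.p x.2.1 = 0 := Subsingleton.elim _ _
  unfold relabel
  rw [h]
  cases he : γ.e 0 <;> simp [he] <;> cases x.1 <;> rfl

lemma relabel_false (γ : Whitten 1) (nn : Fin 1 → ℕ) (he : γ.e 0 = false) (x : SL 1) :
    relabel γ nn x = (!x.1, (0, (nn 0 + 1 - x.2.2) % nn 0 + 1)) := by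
  have h : γ.p x.2.1 = 0 := Subsingleton.elim _ _
  have h2 : x.2.1 = (0 : Fin 1) := Subsingleton.elim _ _
  unfold relabel
  rw [h, he, h2]
  simp

lemma relabel_negS (γ : Whitten 1) (nn : Fin 1 → ℕ) (l : Label 1) :
    relabel γ nn (false, l) = (!(relabel γ nn (true, l)).1, (relabel γ nn (true, l)).2) := by
  simp only [relabel]
  split <;> rfl

lemma entry_ne {nn : Fin 1 → ℕ} {Q : Finset (Quad 1)} (h : IsPDCode nn Q) {q : Quad 1}
    (hq : q ∈ Q) {k k' : Fin 4} (hkk : k ≠ k') (he : q k = q k') : False := by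
  have hb := h.mem q hq k
  obtain ⟨y, _, hu⟩ := h.once (q k) hb.1 hb.2
  have e1 := hu ⟨⟨q, hq⟩, k⟩ rfl
  have e2 := hu ⟨⟨q, hq⟩, k'⟩ he.symm
  exact hkk (congrArg Prod.snd (e1.trans e2.symm))

lemma actQuad_shift (γ : Whitten 1) (nn : Fin 1 → ℕ) (q : Quad 1) :
    ∃ t : Fin 4, ∀ k, actQuad γ nn q k = relabel γ nn (q (k + t)) := by
  unfold actQuad
  exact ⟨_, fun k => by rw [add_assoc]⟩

lemma key (n a : ℕ) (hn : 1 ≤ n) (h1 : 1 ≤ a) (h2 : a ≤ n)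
    (heq : a % n + 1 = (n + 1 - a) % n + 1) : 2 * a = n + 1 := by
  have m1 : a % n = if a = n then 0 else a := by
    split_ifs with hb
    · rw [hb, Nat.mod_self]
    · exact Nat.mod_eq_of_lt (by omega)
  have m2 : (n + 1 - a) % n = if n + 1 - a = n then 0 else n + 1 - a := by
    split_ifs with hb
    · rw [hb, Nat.mod_self]
    · exact Nat.mod_eq_of_lt (by omega)
  rw [m1, m2] at heq
  split_ifs at heq <;> omega

lemma fixed_loop (nn : Fin 1 → ℕ) (Q : Finset (Quad 1)) (γ : Whitten 1)
    (hloop : ∃! q : Quad 1, q ∈ Q ∧ ∃ l : Label 1,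
      (∃ k : Fin 4, q k = (true, l)) ∧ (∃ k : Fin 4, q k = (false, l)))
    (hf : Fixes γ nn Q) :
    ∃ q, (q ∈ Q ∧ ∃ l : Label 1,
      (∃ k : Fin 4, q k = (true, l)) ∧ (∃ k : Fin 4, q k = (false, l))) ∧
      actQuad γ nn q = q := by
  obtain ⟨q, ⟨hq, l, ⟨k1, e1⟩, ⟨k2, e2⟩⟩, huniq⟩ := hloop
  refine ⟨q, ⟨hq, l, ⟨k1, e1⟩, ⟨k2, e2⟩⟩, ?_⟩
  have hmem : actQuad γ nn q ∈ Q := by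
    rw [← hf.2]; exact Finset.mem_image_of_mem _ hq
  obtain ⟨t, ht⟩ := actQuad_shift γ nn q
  have hp1 : actQuad γ nn q (k1 - t) = relabel γ nn (true, l) := by
    rw [ht, sub_add_cancel, e1]
  have hp2 : actQuad γ nn q (k2 - t) = relabel γ nn (false, l) := by
    rw [ht, sub_add_cancel, e2]
  rw [relabel_negS] at hp2
  have hloop' : ∃ l' : Label 1,
      (∃ k : Fin 4, actQuad γ nn q k = (true, l')) ∧
      (∃ k : Fin 4, actQuad γ nn q k = (false, l')) := by
    refine ⟨(relabel γ nn (true, l)).2, ?_⟩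
    cases hb : (relabel γ nn (true, l)).1
    · rw [hb] at hp2
      exact ⟨⟨k2 - t, by rw [hp2]; rfl⟩, ⟨k1 - t, by rw [hp1]; exact Prod.ext hb rfl⟩⟩
    · rw [hb] at hp2
      exact ⟨⟨k1 - t, by rw [hp1]; exact Prod.ext hb rfl⟩, ⟨k2 - t, by rw [hp2]; rfl⟩⟩
  exact huniq _ ⟨hmem, hloop'⟩

lemma actQuad_shift' (γ : Whitten 1) (nn : Fin 1 → ℕ) (q : Quad 1) :
    ∃ t : Fin 4, (∀ k, actQuad γ nn q k = relabel γ nn (q (k + t))) ∧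
      (γ.e0 = false → t + t = 2) ∧ (γ.e0 = true → γ.e 0 = false → t = 2) := by
  have hE : ∀ i : Fin 1, γ.e i = γ.e 0 := fun i => by rw [Subsingleton.elim i 0]
  unfold actQuad
  refine ⟨_, fun k => by rw [add_assoc], ?_, ?_⟩
  · intro he0
    simp only [hE, he0]
    split_ifs <;> first | decide | (exfalso; tauto)
  · intro he0 he
    simp only [hE, he0, he]
    split_ifs <;> first | decide | (exfalso; tauto)

lemma not_mirrorlike (nn : Fin 1 → ℕ) (Q : Finset (Quad 1)) (h : IsPDCode nn Q)
    (γ : Whitten 1) (he0 : γ.e0 = false)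
    (q : Quad 1) (hq : q ∈ Q) (hfix : actQuad γ nn q = q) : False := by
  have h0 : (q 0).1 = true := (h.under q hq).1
  have h2 : (q 2).1 = false := (h.under q hq).2.1
  obtain ⟨t, ht, htt, -⟩ := actQuad_shift' γ nn q
  have ht' : ∀ k, q k = relabel γ nn (q (k + t)) := fun k => by
    conv_lhs => rw [← hfix]
    exact ht k
  have s0 := congrArg Prod.fst (ht' 0)
  have s1 := congrArg Prod.fst (ht' t)
  rw [relabel_fst, zero_add, h0] at s0
  rw [relabel_fst, htt he0, h2] at s1
  rw [s1] at s0
  cases γ.e 0 <;> simp at s0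

lemma not_reverselike (nn : Fin 1 → ℕ) (Q : Finset (Quad 1)) (h : IsPDCode nn Q)
    (γ : Whitten 1) (he0 : γ.e0 = true) (he : γ.e 0 = false)
    (q : Quad 1) (hq : q ∈ Q) (hfix : actQuad γ nn q = q) : False := by
  obtain ⟨t, ht, -, ht2⟩ := actQuad_shift' γ nn q
  rw [ht2 he0 he] at ht
  have ht' : ∀ k, q k = relabel γ nn (q (k + 2)) := fun k => by
    conv_lhs => rw [← hfix]
    exact ht k
  set n := nn 0 with hn
  have hb : ∀ k : Fin 4, 1 ≤ (q k).2.2 ∧ (q k).2.2 ≤ n := by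
    intro k
    have := h.mem q hq k
    rwa [Subsingleton.elim (q k).2.1 0] at this
  have hn1 : 1 ≤ n := h.npos 0
  -- under pair: a := (q 0).2.2
  have hu := h.under q hq
  have hu4 : (q 2).2.2 = (q 0).2.2 % n + 1 := by
    rw [hu.2.2.2, Subsingleton.elim (q 0).2.1 0]
  have e20 : (q 2).2.2 = (n + 1 - (q 0).2.2) % n + 1 := by
    have := congrArg (fun x => x.2.2) (ht' 2)
    rw [show (2 + 2 : Fin 4) = 0 from rfl, relabel_false γ nn he] at this
    exact this
  have ka : 2 * (q 0).2.2 = n + 1 :=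
    key n (q 0).2.2 hn1 (hb 0).1 (hb 0).2 (by rw [← hu4, e20])
  -- over pair
  have hov := h.over' q hq
  have main : ∀ kp : Fin 4, kp ≠ 0 → (q kp).1 = true →
      (q (kp + 2)).2.2 = (q kp).2.2 % n + 1 → False := by
    intro kp hkp0 hkp1 hkps
    have ekp : (q (kp + 2)).2.2 = (n + 1 - (q kp).2.2) % n + 1 := by
      have := congrArg (fun x => x.2.2) (ht' (kp + 2))
      rw [show kp + 2 + 2 = kp by rw [add_assoc, show (2+2:Fin 4) = 0 from rfl, add_zero], relabel_false γ nn he] at this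
      exact this
    have kb : 2 * (q kp).2.2 = n + 1 :=
      key n (q kp).2.2 hn1 (hb kp).1 (hb kp).2 (by rw [← hkps, ekp])
    have : q 0 = q kp := by
      refine Prod.ext ?_ (Prod.ext (Subsingleton.elim _ _) ?_)
      · rw [hu.1, hkp1]
      · omega
    exact entry_ne h hq (Ne.symm hkp0) this
  rcases hov with hov | hov
  · refine main 1 (by decide) hov.1 ?_
    rw [show (1 + 2 : Fin 4) = 3 from rfl, hov.2.2.2, Subsingleton.elim (q 1).2.1 0]
  · refine main 3 (by decide) hov.1 ?_
    rw [show (3 + 2 : Fin 4) = 1 from rfl, hov.2.2.2, Subsingleton.elim (q 3).2.1 0]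

/-- A knot PD-code with exactly one Reidemeister 1 loop is not fixed by the mirror
element `(−1,1)`, not fixed by the reversal element `(1,−1)`, and indeed fixed by
no non-identity element of `Γ_1`. -/
theorem one_loop_knot_fixed_only_by_id (nn : Fin 1 → ℕ) (Q : Finset (Quad 1))
    (h : IsPDCode nn Q)
    (hloop : ∃! q : Quad 1, q ∈ Q ∧ ∃ l : Label 1,
      (∃ k : Fin 4, q k = (true, l)) ∧ (∃ k : Fin 4, q k = (false, l))) :
    ¬ Fixes mirrorW nn Q ∧ ¬ Fixes reverseW nn Q ∧
      ∀ γ : Whitten 1, Fixes γ nn Q → γ = wOne 1 := by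
  have notfix : ∀ γ : Whitten 1, γ.e0 = false ∨ γ.e 0 = false → ¬ Fixes γ nn Q := by
    intro γ hne hf
    obtain ⟨q, ⟨hq, -⟩, hfix⟩ := fixed_loop nn Q γ hloop hf
    cases he0 : γ.e0
    · exact not_mirrorlike nn Q h γ he0 q hq hfix
    · rcases hne with h1 | h1
      · rw [he0] at h1; exact absurd h1 (by simp)
      · exact not_reverselike nn Q h γ he0 h1 q hq hfix
  refine ⟨notfix _ (Or.inl rfl), notfix _ (Or.inr rfl), ?_⟩
  intro γ hf
  by_cases he0 : γ.e0 = true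
  · by_cases he : γ.e 0 = true
    · obtain ⟨e0, e, p⟩ := γ
      simp only at he0 he
      have hp : p = 1 := Equiv.ext fun x => Subsingleton.elim _ _
      have he2 : e = fun _ => true := funext fun i => by
        rw [Subsingleton.elim i 0]; exact he
      rw [he0, he2, hp]
      rfl
    · exact absurd hf (notfix γ (Or.inr (by simpa using he)))
  · exact absurd hf (notfix γ (Or.inl (by simpa using he0)))
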